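/- arXiv:2004.01442 — 2 statements merged into one kernel-verified Lean document; each statement's English description precedes it below -/
import Mathlib

section
/- Let T_1, ..., T_M be operators on ℝ^d, each α-averaged for some α ∈ (0,1], let λ ∈ (0, 1/α), let H ≥ 1 be an integer, and set 𝒯̃_λ = (1/M) Σ_{i=1}^M (λT_i + (1−λ)Id)^H and ζ = Hαλ / (1 + (H−1)αλ). Let x† be a fixed point of 𝒯̃_λ and let (y_n) be defined by y_{n+1} = 𝒯̃_λ(y_n) from an arbitrary y_0 ∈ ℝ^d. Then the squared differences of successive iterates are summable: Σ_{n∈ℕ} ‖y_{n+1} − y_n‖² ≤ (ζ/(1−ζ)) ‖y_0 − x†‖². -/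
/-!
An α-averaged operator `U` satisfies `‖Ux - Uy‖² + β ‖(x - Ux) - (y - Uy)‖² ≤ ‖x - y‖²` with
`β = (1 - α) / α`. This inequality survives composition (the constants combine like parallel
resistors, so an `H`-fold iterate keeps `β / H`) and averaging (both squared norms are convex).
For the relaxed operators `λTᵢ + (1 - λ)Id`, which are `αλ`-averaged, this gives `𝒯̃_λ` the
constant `κ = (1 - αλ) / (αλH)`, and `κ⁻¹ = ζ / (1 - ζ)`. Applied to an iterate and the fixed
point `x†` the inequality reads `κ ‖y_{n+1} - y_n‖² ≤ ‖y_n - x†‖² - ‖y_{n+1} - x†‖²`, which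
telescopes.
-/

open Finset

variable {E : Type*} [NormedAddCommGroup E]

/-- For `β = (1 - α) / α` this is the usual characterisation of α-averagedness. -/
def AveragedIneq (β : ℝ) (U : E → E) : Prop :=
  ∀ x y : E, ‖U x - U y‖ ^ 2 + β * ‖(x - U x) - (y - U y)‖ ^ 2 ≤ ‖x - y‖ ^ 2

lemma parallel_mul_sq_add_le {a b : ℝ} (ha : 0 ≤ a) (hb : 0 ≤ b) (s t : ℝ) :
    a * b / (a + b) * (s + t) ^ 2 ≤ a * s ^ 2 + b * t ^ 2 := by
  rcases (add_nonneg ha hb).eq_or_lt with hab | hab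
  · rw [← hab, div_zero, zero_mul]
    positivity
  · rw [div_mul_eq_mul_div, div_le_iff₀ hab]
    nlinarith [sq_nonneg (a * s - b * t)]

namespace AveragedIneq

lemma comp {β₁ β₂ : ℝ} (hβ₁ : 0 ≤ β₁) (hβ₂ : 0 ≤ β₂) {U V : E → E}
    (hU : AveragedIneq β₁ U) (hV : AveragedIneq β₂ V) :
    AveragedIneq (β₁ * β₂ / (β₁ + β₂)) (V ∘ U) := by
  intro x y
  set a := (x - U x) - (y - U y)
  set b := (U x - V (U x)) - (U y - V (U y))
  have hres : (x - V (U x)) - (y - V (U y)) = a + b := by simp only [a, b]; abel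
  have hnorm : ‖a + b‖ ^ 2 ≤ (‖a‖ + ‖b‖) ^ 2 := by gcongr; exact norm_add_le a b
  have hparallel := parallel_mul_sq_add_le hβ₁ hβ₂ ‖a‖ ‖b‖
  have hcoef : 0 ≤ β₁ * β₂ / (β₁ + β₂) := by positivity
  simp only [Function.comp_apply, hres]
  nlinarith [hU x y, hV (U x) (U y)]

lemma iterate {β : ℝ} (hβ : 0 ≤ β) {U : E → E} (hU : AveragedIneq β U) {k : ℕ}
    (hk : 0 < k) :
    AveragedIneq (β / k) U^[k] := by
  induction k, hk using Nat.le_induction with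
  | base => simpa using hU
  | succ k hk ih =>
    have hk' : (0 : ℝ) < k := by exact_mod_cast hk
    have hcoef : β / k * β / (β / k + β) = β / ↑(k + 1) := by
      rcases hβ.eq_or_lt with rfl | hβ
      · simp
      · push_cast
        field_simp
        ring
    rw [Function.iterate_succ', ← hcoef]
    exact ih.comp (by positivity) hβ hU

lemma summable_and_tsum_le {κ : ℝ} (hκ : 0 < κ) {S : E → E} (hS : AveragedIneq κ S)
    {x : E} (hx : S x = x) {y : ℕ → E} (hy : ∀ n, y (n + 1) = S (y n)) :
    Summable (fun n => ‖y (n + 1) - y n‖ ^ 2) ∧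
      ∑' n, ‖y (n + 1) - y n‖ ^ 2 ≤ κ⁻¹ * ‖y 0 - x‖ ^ 2 := by
  have hstep : ∀ n, ‖y (n + 1) - x‖ ^ 2 + κ * ‖y (n + 1) - y n‖ ^ 2 ≤ ‖y n - x‖ ^ 2 := by
    intro n
    have h := hS (y n) x
    rwa [hx, ← hy, sub_self, sub_zero, norm_sub_rev (y n)] at h
  have htelescope : ∀ N, κ * ∑ n ∈ range N, ‖y (n + 1) - y n‖ ^ 2 + ‖y N - x‖ ^ 2
      ≤ ‖y 0 - x‖ ^ 2 := by
    intro N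
    induction N with
    | zero => simp
    | succ N ih => rw [sum_range_succ, mul_add]; linarith [hstep N]
  have hpartial : ∀ N, ∑ n ∈ range N, ‖y (n + 1) - y n‖ ^ 2 ≤ κ⁻¹ * ‖y 0 - x‖ ^ 2 := by
    intro N
    rw [← div_eq_inv_mul, le_div_iff₀' hκ]
    linarith [htelescope N, sq_nonneg ‖y N - x‖]
  exact ⟨summable_of_sum_range_le (fun _ => sq_nonneg _) hpartial,
    Real.tsum_le_of_sum_range_le (fun _ => sq_nonneg _) hpartial⟩

end AveragedIneq

section NormedSpace

variable [NormedSpace ℝ E]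

lemma sq_norm_mean_le {ι : Type*} [Fintype ι] (v : ι → E) :
    ‖(Fintype.card ι : ℝ)⁻¹ • ∑ i, v i‖ ^ 2 ≤ (Fintype.card ι : ℝ)⁻¹ * ∑ i, ‖v i‖ ^ 2 := by
  have hsum : ‖∑ i, v i‖ ^ 2 ≤ Fintype.card ι * ∑ i, ‖v i‖ ^ 2 :=
    calc ‖∑ i, v i‖ ^ 2 ≤ (∑ i, ‖v i‖) ^ 2 := by gcongr; exact norm_sum_le _ _
      _ ≤ Fintype.card ι * ∑ i, ‖v i‖ ^ 2 := by
        simpa using sq_sum_le_card_mul_sum_sq (s := univ) (f := fun i => ‖v i‖)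
  rw [norm_smul, Real.norm_of_nonneg (by positivity), mul_pow, sq, mul_assoc]
  gcongr
  rcases (Fintype.card ι).eq_zero_or_pos with h | h
  · simp only [h, CharP.cast_eq_zero, inv_zero, zero_mul]
    positivity
  · rwa [inv_mul_le_iff₀ (by positivity)]

lemma AveragedIneq.mean {ι : Type*} [Fintype ι] [Nonempty ι] {β : ℝ} (hβ : 0 ≤ β)
    {U : ι → E → E} (hU : ∀ i, AveragedIneq β (U i)) :
    AveragedIneq β (fun x => (Fintype.card ι : ℝ)⁻¹ • ∑ i, U i x) := by
  intro x y
  set c : ℝ := (Fintype.card ι : ℝ)⁻¹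
  have hc : c * Fintype.card ι = 1 := inv_mul_cancel₀ (by positivity)
  have hdiff : c • ∑ i, U i x - c • ∑ i, U i y = c • ∑ i, (U i x - U i y) := by
    rw [sum_sub_distrib, smul_sub]
  have hres : (x - c • ∑ i, U i x) - (y - c • ∑ i, U i y)
      = c • ∑ i, ((x - U i x) - (y - U i y)) := by
    simp only [sum_sub_distrib, smul_sub, sum_const, card_univ, ← Nat.cast_smul_eq_nsmul ℝ,
      smul_smul, hc, one_smul]
  have hsum : ∑ i, (‖U i x - U i y‖ ^ 2 + β * ‖(x - U i x) - (y - U i y)‖ ^ 2)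
      ≤ Fintype.card ι * ‖x - y‖ ^ 2 := by
    simpa using sum_le_sum fun i (_ : i ∈ univ) => hU i x y
  rw [sum_add_distrib, ← mul_sum] at hsum
  rw [hdiff, hres]
  have hc0 : 0 ≤ c := by positivity
  nlinarith [sq_norm_mean_le fun i => U i x - U i y,
    sq_norm_mean_le fun i => (x - U i x) - (y - U i y), mul_le_mul_of_nonneg_left hsum hc0]

end NormedSpace

section InnerProductSpace

variable [InnerProductSpace ℝ E]

lemma norm_smul_add_one_sub_smul_sq (μ : ℝ) (u v : E) :
    ‖μ • v + (1 - μ) • u‖ ^ 2 + μ * (1 - μ) * ‖u - v‖ ^ 2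
      = μ * ‖v‖ ^ 2 + (1 - μ) * ‖u‖ ^ 2 := by
  simp only [← real_inner_self_eq_norm_sq, inner_add_add_self, inner_sub_sub_self,
    real_inner_smul_left, real_inner_smul_right, real_inner_comm u v]
  ring

lemma AveragedIneq.of_eq_smul_add_smul {μ : ℝ} (hμ : 0 ≤ μ) {T' U : E → E}
    (hT' : ∀ x y, ‖T' x - T' y‖ ≤ ‖x - y‖) (hU : ∀ x, U x = μ • T' x + (1 - μ) • x) :
    AveragedIneq ((1 - μ) / μ) U := by
  intro x y
  have hUxy : U x - U y = μ • (T' x - T' y) + (1 - μ) • (x - y) := by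
    simp only [hU]; module
  have hres : (x - U x) - (y - U y) = μ • ((x - y) - (T' x - T' y)) := by
    simp only [hU]; module
  have hcoef : (1 - μ) / μ * μ ^ 2 = μ * (1 - μ) := by
    rcases hμ.eq_or_lt with rfl | hμ
    · simp
    · field_simp
  have hT'sq : ‖T' x - T' y‖ ^ 2 ≤ ‖x - y‖ ^ 2 := by gcongr; exact hT' x y
  rw [hUxy, hres, norm_smul, Real.norm_of_nonneg hμ, mul_pow, ← mul_assoc, hcoef]
  nlinarith [norm_smul_add_one_sub_smul_sq μ (x - y) (T' x - T' y)]

end InnerProductSpace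

theorem stmt_2_general (d M : ℕ) (hM : 0 < M)
    (T : Fin M → EuclideanSpace ℝ (Fin d) → EuclideanSpace ℝ (Fin d))
    (α : ℝ) (hα0 : 0 < α)
    (hT : ∀ i, ∃ T' : EuclideanSpace ℝ (Fin d) → EuclideanSpace ℝ (Fin d),
      (∀ x y, ‖T' x - T' y‖ ≤ ‖x - y‖) ∧ ∀ x, T i x = α • T' x + (1 - α) • x)
    (l : ℝ) (hl0 : 0 < l) (hl1 : l < 1 / α)
    (H : ℕ) (hH : 1 ≤ H)
    (S : EuclideanSpace ℝ (Fin d) → EuclideanSpace ℝ (Fin d))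
    (hS : ∀ x, S x = (M : ℝ)⁻¹ • ∑ i, (fun z => l • T i z + (1 - l) • z)^[H] x)
    (ζ : ℝ) (hζ : ζ = (H : ℝ) * α * l / (1 + ((H : ℝ) - 1) * α * l))
    (xd : EuclideanSpace ℝ (Fin d)) (hxd : S xd = xd)
    (y : ℕ → EuclideanSpace ℝ (Fin d)) (hy : ∀ n, y (n + 1) = S (y n)) :
    Summable (fun n : ℕ => ‖y (n + 1) - y n‖ ^ 2) ∧
      ∑' n : ℕ, ‖y (n + 1) - y n‖ ^ 2 ≤ ζ / (1 - ζ) * ‖y 0 - xd‖ ^ 2 := by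
  have hμ0 : 0 < α * l := mul_pos hα0 hl0
  have hμ1 : 0 < 1 - α * l := by rw [lt_div_iff₀' hα0] at hl1; linarith
  have hH0 : (0 : ℝ) < H := by exact_mod_cast hH
  have hrelax : ∀ i, AveragedIneq ((1 - α * l) / (α * l)) fun z => l • T i z + (1 - l) • z := by
    intro i
    obtain ⟨T', hT', hTi⟩ := hT i
    exact .of_eq_smul_add_smul hμ0.le hT' fun x => by simp only [hTi]; module
  have : Nonempty (Fin M) := Fin.pos_iff_nonempty.mp hM
  set κ := (1 - α * l) / (α * l) / H
  have hκ : 0 < κ := by positivity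
  have hSavg : AveragedIneq κ S := by
    have hS' : S = fun x => ((Fintype.card (Fin M) : ℝ)⁻¹ •
        ∑ i, (fun z => l • T i z + (1 - l) • z)^[H] x) := funext fun x => by simp [hS]
    rw [hS']
    exact .mean hκ.le fun i => (hrelax i).iterate (by positivity) hH
  have hconst : ζ / (1 - ζ) = κ⁻¹ := by
    have hden : 1 + ((H : ℝ) - 1) * α * l ≠ 0 := by nlinarith
    rw [hζ, one_sub_div hden, div_div_div_cancel_right₀ hden, inv_div, div_div_eq_mul_div]
    congr 1 <;> ring
  rw [hconst]
  exact hSavg.summable_and_tsum_le hκ hxd hy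

/-- summability of the squared successive differences of the
iterates of 𝒯̃_λ, with bound (ζ/(1−ζ)) ‖y₀ − x†‖². -/
theorem stmt_2 (d M : ℕ) (hM : 0 < M)
    (T : Fin M → EuclideanSpace ℝ (Fin d) → EuclideanSpace ℝ (Fin d))
    (α : ℝ) (hα0 : 0 < α) (hα1 : α ≤ 1)
    (hT : ∀ i, ∃ T' : EuclideanSpace ℝ (Fin d) → EuclideanSpace ℝ (Fin d),
      (∀ x y, ‖T' x - T' y‖ ≤ ‖x - y‖) ∧ ∀ x, T i x = α • T' x + (1 - α) • x)
    (l : ℝ) (hl0 : 0 < l) (hl1 : l < 1 / α)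
    (H : ℕ) (hH : 1 ≤ H)
    (S : EuclideanSpace ℝ (Fin d) → EuclideanSpace ℝ (Fin d))
    (hS : ∀ x, S x = (M : ℝ)⁻¹ • ∑ i, (fun z => l • T i z + (1 - l) • z)^[H] x)
    (ζ : ℝ) (hζ : ζ = (H : ℝ) * α * l / (1 + ((H : ℝ) - 1) * α * l))
    (xd : EuclideanSpace ℝ (Fin d)) (hxd : S xd = xd)
    (y : ℕ → EuclideanSpace ℝ (Fin d)) (hy : ∀ n, y (n + 1) = S (y n)) :
    Summable (fun n : ℕ => ‖y (n + 1) - y n‖ ^ 2) ∧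
      ∑' n : ℕ, ‖y (n + 1) - y n‖ ^ 2 ≤ ζ / (1 - ζ) * ‖y 0 - xd‖ ^ 2 :=
  stmt_2_general d M hM T α hα0 hT l hl0 hl1 H hH S hS ζ hζ xd hxd y hy
end

section
/- Let T_1, ..., T_M be firmly nonexpansive operators on ℝ^d, let 𝒯 = (1/M) Σ_{i=1}^M T_i, let g_i(x) = x − T_i(x), let x⋆ be a fixed point of 𝒯, and let σ² = (1/M) Σ_{i=1}^M ‖x⋆ − T_i(x⋆)‖². Let H ≥ 1 be an integer, let 0 = t_0 < t_1 < t_2 < ... be integers with t_n − t_{n−1} ≤ H for all n ≥ 1, and let λ satisfy 0 < λ ≤ 1/(8·max(1, H−1)). Define sequences (x_i^k)_{k∈ℕ}, i = 1,...,M, in ℝ^d by: x_i^0 = x̂^0 for all i and some x̂^0 ∈ ℝ^d; for each k, set h_i^{k+1} = x_i^k − λ g_i(x_i^k); if k+1 = t_n for some n then x_i^{k+1} = (1/M) Σ_{j=1}^M h_j^{k+1} for all i, otherwise x_i^{k+1} = h_i^{k+1}. Let x̂^k = (1/M) Σ_{i=1}^M x_i^k. Then for every integer T ≥ 1, (1/T)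 Σ_{k=0}^{T−1} ‖x̂^k − 𝒯(x̂^k)‖² ≤ 3‖x̂^0 − x⋆‖²/(λT) + 36λ²(H−1)²σ². -/
/-!
Since `T_i` is firmly nonexpansive, the residual `g_i = id - T_i` is cocoercive:
`‖g_i a - g_i b‖² ≤ ⟪g_i a - g_i b, a - b⟫`. Every step moves the mean iterate `x̂` by `-λ` times
the mean of the local residuals, so cocoercivity gives the descent inequality
`‖x̂^{k+1} - x⋆‖² ≤ ‖x̂^k - x⋆‖² - λ(1 - λ) S_k + λ D_k`, where `S_k` is the mean of
`‖g_i(x_i^k) - g_i(x⋆)‖²` and `D_k` is the dispersion of the local iterates around `x̂^k`; likewise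
the fixed-point residual of `x̂^k` is at most `2 D_k + 2 S_k`. Since the last synchronization is at
most `H - 1` steps back, `x_i^k - x̂^k` is `-λ` times a sum of at most `H - 1` centred residuals, so
`D_k ≤ λ² (H - 1) ∑_j (dispersion of the residuals at time j)` over those steps, and each such
dispersion is at most `2 (S_j + σ²)`. Summing over `k` costs another factor `H - 1`, and the
step-size condition lets the telescoped descent absorb the drift.
-/

open Finset RealInnerProductSpace

lemma norm_add_sq_le_two_mul {E : Type*} [SeminormedAddCommGroup E] (a b : E) :
    ‖a + b‖ ^ 2 ≤ 2 * (‖a‖ ^ 2 + ‖b‖ ^ 2) :=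
  (pow_le_pow_left₀ (norm_nonneg _) (norm_add_le a b) 2).trans add_sq_le

lemma norm_sum_sq_le_card_mul {E ι : Type*} [SeminormedAddCommGroup E] (s : Finset ι)
    (w : ι → E) :
    ‖∑ j ∈ s, w j‖ ^ 2 ≤ #s * ∑ j ∈ s, ‖w j‖ ^ 2 :=
  (pow_le_pow_left₀ (norm_nonneg _) (norm_sum_le s w) 2).trans sq_sum_le_card_mul_sum_sq

section InnerProductSpace

variable {E : Type*} [NormedAddCommGroup E] [InnerProductSpace ℝ E]

lemma norm_sub_sub_sq_le_inner_of_firmlyNonexpansive {T : E → E}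
    (hT : ∀ x y, ‖T x - T y‖ ^ 2 ≤ ‖x - y‖ ^ 2 - ‖T x - x - T y + y‖ ^ 2) (a b : E) :
    ‖(a - T a) - (b - T b)‖ ^ 2 ≤ ⟪(a - T a) - (b - T b), a - b⟫ := by
  have h := hT a b
  rw [show T a - a - T b + b = (T a - T b) - (a - b) by abel,
    norm_sub_sq_real (T a - T b)] at h
  rw [show a - T a - (b - T b) = (a - b) - (T a - T b) by abel,
    norm_sub_sq_real (a - b), inner_sub_left (a - b), real_inner_self_eq_norm_sq]
  linarith [real_inner_comm (a - b) (T a - T b)]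

lemma norm_le_of_sq_le_inner {u v : E} (h : ‖u‖ ^ 2 ≤ ⟪u, v⟫) : ‖u‖ ≤ ‖v‖ := by
  nlinarith [h.trans (real_inner_le_norm u v), norm_nonneg u, norm_nonneg v]

lemma sq_sub_sq_le_two_mul_inner_sub {u v : E} (h : ‖u‖ ^ 2 ≤ ⟪u, v⟫) (e : E) :
    ‖u‖ ^ 2 - ‖e‖ ^ 2 ≤ 2 * ⟪u, v - e⟫ := by
  rw [inner_sub_right]
  nlinarith [real_inner_le_norm u e, two_mul_le_add_sq ‖u‖ ‖e‖]

end InnerProductSpace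

section Average

variable {M : ℕ} {F : Type*} [AddCommGroup F] [Module ℝ F]

noncomputable def avg (v : Fin M → F) : F := (M : ℝ)⁻¹ • ∑ i, v i

lemma avg_const (hM : 0 < M) (c : F) : avg (fun _ : Fin M => c) = c := by
  simp [avg, ← Nat.cast_smul_eq_nsmul ℝ, smul_smul, hM.ne']

lemma avg_add (v w : Fin M → F) : avg (fun i => v i + w i) = avg v + avg w := by
  simp [avg, sum_add_distrib]

lemma avg_sub (v w : Fin M → F) : avg (fun i => v i - w i) = avg v - avg w := by
  simp [avg, sum_sub_distrib, smul_sub]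

lemma avg_smul (c : ℝ) (v : Fin M → F) : avg (fun i => c • v i) = c • avg v := by
  simp [avg, ← smul_sum, smul_comm c]

lemma avg_sum_comm {ι : Type*} (s : Finset ι) (f : Fin M → ι → F) :
    avg (fun i => ∑ j ∈ s, f i j) = ∑ j ∈ s, avg (fun i => f i j) := by
  rw [avg, sum_comm, smul_sum]; rfl

lemma avg_mul_left (c : ℝ) (f : Fin M → ℝ) : avg (fun i => c * f i) = c * avg f :=
  avg_smul c f

lemma avg_le_avg {f f' : Fin M → ℝ} (h : ∀ i, f i ≤ f' i) : avg f ≤ avg f' :=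
  smul_le_smul_of_nonneg_left (sum_le_sum fun i _ => h i) (by positivity)

lemma avg_nonneg {f : Fin M → ℝ} (h : ∀ i, 0 ≤ f i) : 0 ≤ avg f :=
  smul_nonneg (by positivity) (sum_nonneg fun i _ => h i)

variable {E : Type*} [NormedAddCommGroup E] [InnerProductSpace ℝ E]

lemma inner_avg_left (v : Fin M → E) (w : E) : ⟪avg v, w⟫ = avg (fun i => ⟪v i, w⟫) := by
  simp [avg, real_inner_smul_left, sum_inner]

noncomputable def dispersion (v : Fin M → E) : ℝ := avg fun i => ‖v i - avg v‖ ^ 2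

lemma dispersion_nonneg (v : Fin M → E) : 0 ≤ dispersion v :=
  avg_nonneg fun _ => sq_nonneg _

lemma dispersion_eq (hM : 0 < M) (v : Fin M → E) :
    dispersion v = avg (fun i => ‖v i‖ ^ 2) - ‖avg v‖ ^ 2 := by
  simp only [dispersion, norm_sub_sq_real]
  rw [avg_add, avg_sub, avg_mul_left, ← inner_avg_left, real_inner_self_eq_norm_sq,
    avg_const hM]
  ring

lemma norm_avg_sq_le (hM : 0 < M) (v : Fin M → E) :
    ‖avg v‖ ^ 2 ≤ avg (fun i => ‖v i‖ ^ 2) := by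
  linarith [dispersion_eq hM v, dispersion_nonneg v]

lemma dispersion_le (hM : 0 < M) (v c : Fin M → E) :
    dispersion v ≤ 2 * (avg (fun i => ‖v i - c i‖ ^ 2) + avg (fun i => ‖c i‖ ^ 2)) := by
  rw [dispersion_eq hM, ← avg_add, ← avg_mul_left]
  have h i : ‖v i‖ ^ 2 ≤ 2 * (‖v i - c i‖ ^ 2 + ‖c i‖ ^ 2) := by
    simpa using norm_add_sq_le_two_mul (v i - c i) (c i)
  linarith [avg_le_avg h, sq_nonneg ‖avg v‖]

end Average

section Residuals

variable {E : Type*} [NormedAddCommGroup E] [InnerProductSpace ℝ E] {M : ℕ}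
  {g : Fin M → E → E} {xs : E}

lemma norm_avg_sub_smul_avg_sub_sq_le (hM : 0 < M)
    (hg : ∀ i a b, ‖g i a - g i b‖ ^ 2 ≤ ⟪g i a - g i b, a - b⟫)
    (hxs : avg (fun i => g i xs) = 0) {l : ℝ} (hl : 0 ≤ l) (y : Fin M → E) :
    ‖avg y - l • avg (fun i => g i (y i)) - xs‖ ^ 2
      ≤ ‖avg y - xs‖ ^ 2 - l * (1 - l) * avg (fun i => ‖g i (y i) - g i xs‖ ^ 2)
        + l * dispersion y := by
  have hw : avg (fun i => g i (y i)) = avg (fun i => g i (y i) - g i xs) := by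
    rw [avg_sub, hxs, sub_zero]
  have hinner : avg (fun i => ‖g i (y i) - g i xs‖ ^ 2) - dispersion y
      ≤ 2 * ⟪avg (fun i => g i (y i) - g i xs), avg y - xs⟫ := by
    rw [dispersion, inner_avg_left, ← avg_mul_left, ← avg_sub]
    refine avg_le_avg fun i => ?_
    simpa using sq_sub_sq_le_two_mul_inner_sub (hg i (y i) xs) (y i - avg y)
  have hjensen := norm_avg_sq_le hM fun i => g i (y i) - g i xs
  rw [hw, sub_right_comm, norm_sub_sq_real, inner_smul_right, norm_smul, mul_pow,
    Real.norm_eq_abs, sq_abs, real_inner_comm]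
  nlinarith [mul_le_mul_of_nonneg_left hinner hl, mul_le_mul_of_nonneg_left hjensen (sq_nonneg l)]

lemma norm_avg_apply_avg_sq_le (hM : 0 < M)
    (hg : ∀ i a b, ‖g i a - g i b‖ ^ 2 ≤ ⟪g i a - g i b, a - b⟫)
    (hxs : avg (fun i => g i xs) = 0) (y : Fin M → E) :
    ‖avg (fun i => g i (avg y))‖ ^ 2
      ≤ 2 * dispersion y + 2 * avg (fun i => ‖g i (y i) - g i xs‖ ^ 2) := by
  have hw : avg (fun i => g i (avg y)) = avg (fun i => g i (avg y) - g i xs) := by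
    rw [avg_sub, hxs, sub_zero]
  have h i : ‖g i (avg y) - g i xs‖ ^ 2
      ≤ 2 * ‖y i - avg y‖ ^ 2 + 2 * ‖g i (y i) - g i xs‖ ^ 2 := by
    have hne : ‖g i (avg y) - g i (y i)‖ ≤ ‖y i - avg y‖ :=
      (norm_le_of_sq_le_inner (hg i _ _)).trans_eq (norm_sub_rev _ _)
    have := norm_add_sq_le_two_mul (g i (avg y) - g i (y i)) (g i (y i) - g i xs)
    rw [sub_add_sub_cancel] at this
    nlinarith [norm_nonneg (g i (avg y) - g i (y i))]
  rw [hw, dispersion, ← avg_mul_left, ← avg_mul_left, ← avg_add]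
  exact (norm_avg_sq_le hM _).trans (avg_le_avg h)

end Residuals

lemma StrictMono.exists_le_lt_succ {t : ℕ → ℕ} (ht : StrictMono t) {k : ℕ} (hk : t 0 ≤ k) :
    ∃ n, t n ≤ k ∧ k < t (n + 1) := by
  induction k, hk using Nat.le_induction with
  | base => exact ⟨0, le_rfl, ht (Nat.lt_succ_self 0)⟩
  | succ k _ ih =>
    obtain ⟨n, hnk, hkn⟩ := ih
    rcases (Nat.succ_le_of_lt hkn).lt_or_eq with hlt | heq
    · exact ⟨n, hnk.trans k.le_succ, hlt⟩
    · exact ⟨n + 1, heq.ge, heq.trans_lt (ht (Nat.lt_succ_self _))⟩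

lemma sum_range_sum_Ico_sub_le {f : ℕ → ℝ} (hf : ∀ j, 0 ≤ f j) (m N : ℕ) :
    ∑ k ∈ range N, ∑ j ∈ Ico (k - m) k, f j ≤ m * ∑ j ∈ range N, f j := by
  rw [sum_comm' (t' := range N) (s' := fun j => (Ioc j (j + m)).filter (· < N))
    (fun k j => by simp only [mem_range, mem_Ico, mem_filter, mem_Ioc]; omega), mul_sum]
  refine sum_le_sum fun j _ => ?_
  rw [sum_const, nsmul_eq_mul]
  gcongr
  · exact hf j
  · exact (card_filter_le _ _).trans (by simp)

section Run

variable {E : Type*} [NormedAddCommGroup E] [InnerProductSpace ℝ E] {M : ℕ}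

structure IsLocalFixedPointRun (g : Fin M → E → E) (l : ℝ) (sync : ℕ → Prop)
    (x : Fin M → ℕ → E) : Prop where
  sync_step : ∀ k, sync (k + 1) → ∀ i, x i (k + 1) = avg fun j => x j k - l • g j (x j k)
  local_step : ∀ k, ¬ sync (k + 1) → ∀ i, x i (k + 1) = x i k - l • g i (x i k)

namespace IsLocalFixedPointRun

variable {g : Fin M → E → E} {l : ℝ} {sync : ℕ → Prop} {x : Fin M → ℕ → E}

lemma avg_succ (hx : IsLocalFixedPointRun g l sync x) (hM : 0 < M) (k : ℕ) :
    avg (x · (k + 1)) = avg (x · k) - l • avg (fun i => g i (x i k)) := by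
  have h : avg (x · (k + 1)) = avg fun i => x i k - l • g i (x i k) := by
    by_cases hs : sync (k + 1)
    · simp only [hx.sync_step k hs, avg_const hM]
    · simp only [hx.local_step k hs]
  rw [h, avg_sub, avg_smul]

lemma eq_avg_succ_of_sync (hx : IsLocalFixedPointRun g l sync x) (hM : 0 < M) {k : ℕ}
    (hs : sync (k + 1)) (i : Fin M) : x i (k + 1) = avg (x · (k + 1)) := by
  simp only [hx.sync_step k hs, avg_const hM]

lemma sub_avg_eq_neg_smul_sum (hx : IsLocalFixedPointRun g l sync x) (hM : 0 < M) {s k : ℕ}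
    (hsk : s ≤ k) (hs : ∀ i, x i s = avg (x · s)) (hloc : ∀ j, s ≤ j → j < k → ¬ sync (j + 1))
    (i : Fin M) :
    x i k - avg (x · k)
      = -(l • ∑ j ∈ Ico s k, (g i (x i j) - avg fun i' => g i' (x i' j))) := by
  induction k, hsk using Nat.le_induction with
  | base => simp [hs i]
  | succ k hsk ih =>
    rw [hx.local_step k (hloc k hsk k.lt_succ_self) i, hx.avg_succ hM, sum_Ico_succ_top hsk,
      smul_add, neg_add, ← ih fun j hj hjk => hloc j hj (hjk.trans k.lt_succ_self), smul_sub]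
    abel

lemma dispersion_le_sum (hx : IsLocalFixedPointRun g l sync x) (hM : 0 < M) {s k : ℕ}
    (hsk : s ≤ k) (hs : ∀ i, x i s = avg (x · s)) (hloc : ∀ j, s ≤ j → j < k → ¬ sync (j + 1)) :
    dispersion (x · k)
      ≤ l ^ 2 * (k - s : ℕ) * ∑ j ∈ Ico s k, dispersion fun i => g i (x i j) := by
  have h i : ‖x i k - avg (x · k)‖ ^ 2
      ≤ l ^ 2 * (k - s : ℕ) * ∑ j ∈ Ico s k, ‖g i (x i j) - avg fun i' => g i' (x i' j)‖ ^ 2 := by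
    rw [hx.sub_avg_eq_neg_smul_sum hM hsk hs hloc i, norm_neg, norm_smul, mul_pow,
      Real.norm_eq_abs, sq_abs, mul_assoc]
    gcongr
    simpa using
      norm_sum_sq_le_card_mul (Ico s k) fun j => g i (x i j) - avg fun i' => g i' (x i' j)
  refine (avg_le_avg h).trans_eq ?_
  rw [avg_mul_left, avg_sum_comm]
  rfl

variable {t : ℕ → ℕ}

lemma eq_avg_sync_time (hx : IsLocalFixedPointRun g l (fun k => ∃ n, k = t n) x) (hM : 0 < M)
    (hx0 : ∀ i, x i 0 = avg (x · 0)) (ht0 : t 0 = 0) (ht : StrictMono t) (n : ℕ) (i : Fin M) :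
    x i (t n) = avg (x · (t n)) := by
  rcases n with _ | n
  · simpa [ht0] using hx0 i
  · obtain ⟨k, hk⟩ := Nat.exists_eq_add_one.mpr (ht0 ▸ ht n.succ_pos)
    rw [hk]
    exact hx.eq_avg_succ_of_sync hM ⟨n + 1, hk.symm⟩ i

lemma dispersion_le_sum_Ico_sub (hx : IsLocalFixedPointRun g l (fun k => ∃ n, k = t n) x)
    (hM : 0 < M) (hx0 : ∀ i, x i 0 = avg (x · 0)) (ht0 : t 0 = 0) (ht : StrictMono t) {m : ℕ}
    (htm : ∀ n, t (n + 1) - t n ≤ m + 1) (k : ℕ) :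
    dispersion (x · k) ≤ l ^ 2 * m * ∑ j ∈ Ico (k - m) k, dispersion fun i => g i (x i j) := by
  obtain ⟨n, hnk, hkn⟩ := ht.exists_le_lt_succ (ht0 ▸ k.zero_le)
  have hloc : ∀ j, t n ≤ j → j < k → ¬ ∃ n', j + 1 = t n' := by
    rintro j hj hjk ⟨n', hn'⟩
    have h1 : n < n' := ht.lt_iff_lt.mp (by omega)
    have h2 : n' < n + 1 := ht.lt_iff_lt.mp (by omega)
    omega
  have hkm : k - t n ≤ m := by have := htm n; omega
  calc dispersion (x · k)
      ≤ l ^ 2 * (k - t n : ℕ) * ∑ j ∈ Ico (t n) k, dispersion fun i => g i (x i j) :=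
        hx.dispersion_le_sum hM hnk (hx.eq_avg_sync_time hM hx0 ht0 ht n) hloc
    _ ≤ l ^ 2 * m * ∑ j ∈ Ico (k - m) k, dispersion fun i => g i (x i j) := by
        have hsub : Ico (t n) k ⊆ Ico (k - m) k := Ico_subset_Ico_left (by omega)
        have hnonneg j : 0 ≤ dispersion fun i => g i (x i j) := dispersion_nonneg _
        gcongr
        · exact sum_nonneg fun j _ => hnonneg j
        · exact fun j _ _ => hnonneg j

lemma sum_dispersion_le (hx : IsLocalFixedPointRun g l (fun k => ∃ n, k = t n) x)
    (hM : 0 < M) (hx0 : ∀ i, x i 0 = avg (x · 0)) (ht0 : t 0 = 0) (ht : StrictMono t) {m : ℕ}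
    (htm : ∀ n, t (n + 1) - t n ≤ m + 1) (xs : E) (N : ℕ) :
    ∑ k ∈ range N, dispersion (x · k)
      ≤ 2 * l ^ 2 * m ^ 2 * (∑ k ∈ range N, avg (fun i => ‖g i (x i k) - g i xs‖ ^ 2)
        + N * avg fun i => ‖g i xs‖ ^ 2) := by
  calc ∑ k ∈ range N, dispersion (x · k)
      ≤ ∑ k ∈ range N, l ^ 2 * m * ∑ j ∈ Ico (k - m) k, dispersion fun i => g i (x i j) :=
        sum_le_sum fun k _ => hx.dispersion_le_sum_Ico_sub hM hx0 ht0 ht htm k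
    _ ≤ l ^ 2 * m * (m * ∑ k ∈ range N, dispersion fun i => g i (x i k)) := by
        rw [← mul_sum]
        gcongr
        exact sum_range_sum_Ico_sub_le (fun _ => dispersion_nonneg _) m N
    _ ≤ l ^ 2 * m * (m * ∑ k ∈ range N, 2 * (avg (fun i => ‖g i (x i k) - g i xs‖ ^ 2)
          + avg fun i => ‖g i xs‖ ^ 2)) := by
        gcongr with k
        exact dispersion_le hM _ _
    _ = _ := by
        rw [← mul_sum, sum_add_distrib, sum_const, card_range, nsmul_eq_mul]
        ring

end IsLocalFixedPointRun

end Run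

lemma ergodic_bound_of_descent {R S D G : ℕ → ℝ} {l c σ2 : ℝ} {N : ℕ} (hN : 1 ≤ N)
    (hl : 0 < l) (hc : 0 ≤ c) (hl1 : l ≤ 1 / (8 * max 1 c)) (hσ : 0 ≤ σ2)
    (hR : ∀ k, 0 ≤ R k) (hS : ∀ k, 0 ≤ S k)
    (hdesc : ∀ k, R (k + 1) ≤ R k - l * (1 - l) * S k + l * D k)
    (hG : ∀ k, G k ≤ 2 * D k + 2 * S k)
    (hD : ∑ k ∈ range N, D k ≤ 2 * l ^ 2 * c ^ 2 * (∑ k ∈ range N, S k + N * σ2)) :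
    (N : ℝ)⁻¹ * ∑ k ∈ range N, G k ≤ 3 * R 0 / (l * N) + 36 * l ^ 2 * c ^ 2 * σ2 := by
  have htel : l * (1 - l) * ∑ k ∈ range N, S k ≤ R 0 + l * ∑ k ∈ range N, D k := by
    have h := sum_le_sum fun k (_ : k ∈ range N) =>
      show l * (1 - l) * S k - l * D k ≤ R k - R (k + 1) by linarith [hdesc k]
    rw [sum_range_sub', sum_sub_distrib, ← mul_sum, ← mul_sum] at h
    linarith [hR N]
  have hGsum : ∑ k ∈ range N, G k ≤ 2 * ∑ k ∈ range N, D k + 2 * ∑ k ∈ range N, S k := by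
    rw [mul_sum, mul_sum, ← sum_add_distrib]
    exact sum_le_sum fun k _ => hG k
  have hlc8 := (le_div_iff₀ (by positivity)).mp hl1
  have hl8 : l ≤ 1 / 8 := by nlinarith [le_max_left 1 c]
  have hlc : l * c ≤ 1 / 8 := by nlinarith [le_max_right 1 c]
  have hN0 : (0 : ℝ) < N := by exact_mod_cast hN
  have hSsum : 0 ≤ ∑ k ∈ range N, S k := sum_nonneg fun k _ => hS k
  -- the step-size condition is only needed here, to absorb the drift into the descent
  have hsmall : 0 ≤ 1 - 3 * l - 10 * l ^ 2 * c ^ 2 := by nlinarith [mul_nonneg hl.le hc]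
  have hmain : l * ∑ k ∈ range N, G k ≤ 3 * R 0 + 36 * l ^ 2 * c ^ 2 * σ2 * (l * N) := by
    nlinarith [mul_nonneg hsmall (mul_nonneg hl.le hSsum), mul_le_mul_of_nonneg_left hD hl.le,
      mul_le_mul_of_nonneg_left hGsum hl.le, mul_nonneg (mul_nonneg hl.le hN0.le) hσ,
      sq_nonneg (l * c)]
  have hlN : 0 < l * N := mul_pos hl hN0
  calc (N : ℝ)⁻¹ * ∑ k ∈ range N, G k = (l * ∑ k ∈ range N, G k) / (l * N) := by
        field_simp
    _ ≤ (3 * R 0 + 36 * l ^ 2 * c ^ 2 * σ2 * (l * N)) / (l * N) := by gcongr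
    _ = 3 * R 0 / (l * N) + 36 * l ^ 2 * c ^ 2 * σ2 := by field_simp

/-- Theorem 2: ergodic rate of Algorithm 1 for firmly
nonexpansive operators. -/
theorem stmt_14 (d M : ℕ) (hM : 0 < M)
    (A : Fin M → EuclideanSpace ℝ (Fin d) → EuclideanSpace ℝ (Fin d))
    (hA : ∀ i, ∀ x y, ‖A i x - A i y‖ ^ 2
      ≤ ‖x - y‖ ^ 2 - ‖A i x - x - A i y + y‖ ^ 2)
    (g : Fin M → EuclideanSpace ℝ (Fin d) → EuclideanSpace ℝ (Fin d))
    (hg : ∀ i x, g i x = x - A i x)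
    (xs : EuclideanSpace ℝ (Fin d)) (hxs : (M : ℝ)⁻¹ • ∑ i, A i xs = xs)
    (σ2 : ℝ) (hσ2 : σ2 = (M : ℝ)⁻¹ * ∑ i, ‖xs - A i xs‖ ^ 2)
    (H : ℕ) (hH : 1 ≤ H)
    (t : ℕ → ℕ) (ht0 : t 0 = 0) (htmono : StrictMono t)
    (htH : ∀ n : ℕ, t (n + 1) - t n ≤ H)
    (l : ℝ) (hl0 : 0 < l) (hl1 : l ≤ 1 / (8 * max 1 ((H : ℝ) - 1)))
    (x : Fin M → ℕ → EuclideanSpace ℝ (Fin d))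
    (x0 : EuclideanSpace ℝ (Fin d)) (hinit : ∀ i, x i 0 = x0)
    (hrecC : ∀ k : ℕ, (∃ n, k + 1 = t n) → ∀ i,
      x i (k + 1) = (M : ℝ)⁻¹ • ∑ j, (x j k - l • g j (x j k)))
    (hrecN : ∀ k : ℕ, (¬ ∃ n, k + 1 = t n) → ∀ i,
      x i (k + 1) = x i k - l • g i (x i k))
    (xhat : ℕ → EuclideanSpace ℝ (Fin d))
    (hxhat : ∀ k, xhat k = (M : ℝ)⁻¹ • ∑ i, x i k) :
    ∀ N : ℕ, 1 ≤ N →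
      (N : ℝ)⁻¹ * ∑ k ∈ Finset.range N,
          ‖xhat k - (M : ℝ)⁻¹ • ∑ i, A i (xhat k)‖ ^ 2
        ≤ 3 * ‖x0 - xs‖ ^ 2 / (l * (N : ℝ))
          + 36 * l ^ 2 * ((H : ℝ) - 1) ^ 2 * σ2 := by
  intro N hN
  have hco : ∀ i a b, ‖g i a - g i b‖ ^ 2 ≤ ⟪g i a - g i b, a - b⟫ := fun i a b => by
    simpa only [hg] using norm_sub_sub_sq_le_inner_of_firmlyNonexpansive (hA i) a b
  have hgxs : avg (fun i => g i xs) = 0 := by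
    simp only [hg]
    rw [avg_sub, avg_const hM]
    exact sub_eq_zero.mpr hxs.symm
  have hres y : y - (M : ℝ)⁻¹ • ∑ i, A i y = avg fun i => g i y := by
    simp only [hg]
    rw [avg_sub, avg_const hM]
    rfl
  have hx : IsLocalFixedPointRun g l (fun k => ∃ n, k = t n) x := ⟨hrecC, hrecN⟩
  have hx0 : avg (x · 0) = x0 := by simp only [hinit, avg_const hM]
  have hHm : (H : ℝ) - 1 = (H - 1 : ℕ) := by rw [Nat.cast_sub hH, Nat.cast_one]
  have hσ : σ2 = avg fun i => ‖g i xs‖ ^ 2 := by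
    simp only [hσ2, hg]
    rfl
  rw [hHm] at hl1 ⊢
  rw [hσ, ← hx0]
  refine ergodic_bound_of_descent (R := fun k => ‖avg (x · k) - xs‖ ^ 2)
    (S := fun k => avg fun i => ‖g i (x i k) - g i xs‖ ^ 2) (D := fun k => dispersion (x · k))
    hN hl0 (Nat.cast_nonneg _) hl1 (avg_nonneg fun _ => sq_nonneg _)
    (fun _ => sq_nonneg _) (fun _ => avg_nonneg fun _ => sq_nonneg _) (fun k => ?_) (fun k => ?_)
    (hx.sum_dispersion_le hM (fun i => (hinit i).trans hx0.symm) ht0 htmono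
      (fun n => by have := htH n; omega) xs N)
  · simp only [hx.avg_succ hM k]
    exact norm_avg_sub_smul_avg_sub_sq_le hM hco hgxs hl0.le _
  · simp only [hres, hxhat]
    exact norm_avg_apply_avg_sq_le hM hco hgxs _
end
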